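/- arXiv:0808.0967 — 4 statements merged into one kernel-verified Lean document; each statement's English description precedes it below -/
import Mathlib

section
/- Let Σ be a p×p real symmetric matrix with diagonal entries Σ_{jj} = 1 and off-diagonal entries ρ_{jk}. If for some δ < 1 and some α ≥ 1, (Σ_j (Σ_{k≠j} |ρ_{jk}|^{α/(α-1)})^{α-1})^{1/α} ≤ δ, then every eigenvalue τ of Σ satisfies |1 - τ| ≤ δ; that is, all eigenvalues lie in [1-δ, 1+δ]. -/
/-!
Since the diagonal of `S` is `1`, an eigenpair `S v = τ v` gives `(S - 1) v = (τ - 1) v`, where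
`S - 1` carries only the off-diagonal entries. Hölder's inequality applied row by row bounds
`|((S - 1) v)_j|^α` by `‖row_j‖_q^α ‖v‖_α^α` with `q = α / (α - 1)`; summing over `j` and dividing
by `‖v‖_α^α > 0` yields `|1 - τ|^α ≤ ∑_j ‖row_j‖_q^α`, and `α / q = α - 1`.
-/

open Finset Real

theorem Real.abs_inner_le_Lp_mul_Lq {ι : Type*} (s : Finset ι) (f g : ι → ℝ) {p q : ℝ}
    (hpq : p.HolderConjugate q) :
    |∑ i ∈ s, f i * g i| ≤ (∑ i ∈ s, |f i| ^ p) ^ (1 / p) * (∑ i ∈ s, |g i| ^ q) ^ (1 / q) := by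
  refine abs_le.2 ⟨?_, inner_le_Lp_mul_Lq s f g hpq⟩
  simpa [neg_le, Finset.sum_neg_distrib] using inner_le_Lp_mul_Lq s (-f) g hpq

namespace Matrix

variable {m n : Type*} [Fintype n] {p q : ℝ}

theorem abs_mulVec_apply_rpow_le (hpq : p.HolderConjugate q) (C : Matrix m n ℝ) (v : n → ℝ)
    (j : m) : |(C *ᵥ v) j| ^ p ≤ (∑ k, |C j k| ^ q) ^ (p - 1) * ∑ k, |v k| ^ p := by
  have hA : 0 ≤ ∑ k, |C j k| ^ q := sum_nonneg fun k _ ↦ by positivity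
  have hB : 0 ≤ ∑ k, |v k| ^ p := sum_nonneg fun k _ ↦ by positivity
  calc |(C *ᵥ v) j| ^ p
      ≤ ((∑ k, |C j k| ^ q) ^ (1 / q) * (∑ k, |v k| ^ p) ^ (1 / p)) ^ p :=
        rpow_le_rpow (abs_nonneg _) (abs_inner_le_Lp_mul_Lq _ _ _ hpq.symm) hpq.nonneg
    _ = (∑ k, |C j k| ^ q) ^ (p - 1) * ∑ k, |v k| ^ p := by
        rw [mul_rpow (by positivity) (by positivity), ← rpow_mul hA, ← rpow_mul hB,
          one_div_mul_eq_div, hpq.div_conj_eq_sub_one, one_div_mul_cancel hpq.ne_zero, rpow_one]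

theorem sum_abs_mulVec_apply_rpow_le [Fintype m] (hpq : p.HolderConjugate q) (C : Matrix m n ℝ)
    (v : n → ℝ) :
    ∑ j, |(C *ᵥ v) j| ^ p ≤ (∑ j, (∑ k, |C j k| ^ q) ^ (p - 1)) * ∑ k, |v k| ^ p := by
  rw [sum_mul]
  exact sum_le_sum fun j _ ↦ abs_mulVec_apply_rpow_le hpq C v j

variable [DecidableEq n]

theorem sum_abs_sub_one_apply_rpow {S : Matrix n n ℝ} (hdiag : ∀ j, S j j = 1) (hq : q ≠ 0)
    (j : n) : ∑ k, |(S - 1) j k| ^ q = ∑ k ∈ univ.filter (fun k => k ≠ j), |S j k| ^ q := by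
  rw [sum_filter]
  refine sum_congr rfl fun k _ ↦ ?_
  rcases eq_or_ne k j with rfl | hkj
  · simp [hdiag, zero_rpow hq]
  · simp [hkj, one_apply_ne' hkj]

theorem abs_one_sub_rpow_le_of_mulVec_eq_smul (hpq : p.HolderConjugate q) {S : Matrix n n ℝ}
    (hdiag : ∀ j, S j j = 1) {τ : ℝ} {v : n → ℝ} (hv : v ≠ 0) (heig : S *ᵥ v = τ • v) :
    |1 - τ| ^ p ≤ ∑ j, (∑ k ∈ univ.filter (fun k => k ≠ j), |S j k| ^ q) ^ (p - 1) := by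
  have hB : 0 < ∑ k, |v k| ^ p := by
    obtain ⟨k, hk⟩ := Function.ne_iff.1 hv
    exact sum_pos' (fun i _ ↦ by positivity) ⟨k, mem_univ k, rpow_pos_of_pos (abs_pos.2 hk) _⟩
  have hoff : (S - 1) *ᵥ v = (τ - 1) • v := by
    rw [sub_mulVec, one_mulVec, heig, sub_smul, one_smul]
  have := sum_abs_mulVec_apply_rpow_le hpq (S - 1) v
  simp only [hoff, sum_abs_sub_one_apply_rpow hdiag hpq.symm.ne_zero, Pi.smul_apply, smul_eq_mul,
    abs_mul, mul_rpow (abs_nonneg _) (abs_nonneg _), ← mul_sum] at this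
  rw [abs_sub_comm]
  exact le_of_mul_le_mul_right this hB

end Matrix

theorem gershgorin_lalpha_general (p : ℕ) (S : Matrix (Fin p) (Fin p) ℝ)
    (hdiag : ∀ j, S j j = 1)
    (α δ : ℝ) (hα : 1 ≤ α) (hδ : δ < 1)
    (hbound :
      (∑ j : Fin p,
          (∑ k ∈ univ.filter (fun k => k ≠ j), |S j k| ^ (α / (α - 1))) ^ (α - 1))
        ^ (1 / α) ≤ δ) :
    ∀ (τ : ℝ) (v : Fin p → ℝ), v ≠ 0 → S.mulVec v = τ • v → |1 - τ| ≤ δ := by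
  intro τ v hv heig
  rcases hα.eq_or_lt with rfl | hα1
  · -- at `α = 1` the exponent `α / (α - 1)` is `1 / 0 = 0`, so `hbound` reads `p ≤ δ`
    have hp : (p : ℝ) < 1 := by simpa using hbound.trans_lt hδ
    obtain rfl : p = 0 := by exact_mod_cast Nat.lt_one_iff.1 (by exact_mod_cast hp)
    exact absurd (Subsingleton.elim v 0) hv
  · have hpq : α.HolderConjugate (α / (α - 1)) := .conjExponent hα1
    calc |1 - τ| = (|1 - τ| ^ α) ^ (1 / α) := by
          rw [← rpow_mul (abs_nonneg _), mul_one_div_cancel hpq.ne_zero, rpow_one]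
      _ ≤ _ := rpow_le_rpow (by positivity)
          (Matrix.abs_one_sub_rpow_le_of_mulVec_eq_smul hpq hdiag hv heig) (by positivity)
      _ ≤ δ := hbound

/-- ℓ_α-version of Geršgorin's theorem (key step in Proposition 1):
if the diagonal entries of a symmetric matrix are 1 and the ℓ_α-Geršgorin
quantity of the off-diagonal entries is at most δ < 1, then every eigenvalue
τ satisfies |1 - τ| ≤ δ. -/
theorem gershgorin_lalpha (p : ℕ) (S : Matrix (Fin p) (Fin p) ℝ)
    (hsym : S.IsSymm) (hdiag : ∀ j, S j j = 1)
    (α δ : ℝ) (hα : 1 ≤ α) (hδ : δ < 1)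
    (hbound :
      (∑ j : Fin p,
          (∑ k ∈ univ.filter (fun k => k ≠ j), |S j k| ^ (α / (α - 1))) ^ (α - 1))
        ^ (1 / α) ≤ δ) :
    ∀ (τ : ℝ) (v : Fin p → ℝ), v ≠ 0 → S.mulVec v = τ • v → |1 - τ| ≤ δ :=
  gershgorin_lalpha_general p S hdiag α δ hα hδ hbound
end

section
/- Let X be an n×p matrix and A_1, A_k disjoint subsets of {1,...,p}; write X_1 = X_{A_1}, X_k = X_{A_k}, Σ_{11} = X_1'X_1/n (assumed invertible), Σ_{1k} = X_1'X_k/n, and P_1 the orthogonal projection onto the column span of X_1. Suppose the Gram matrix of the combined columns (X_1, X_k) has smallest eigenvalue at least c > 0 (i.e., ‖X_1 u + X_k w‖^2/n ≥ c(‖u‖^2 + ‖w‖^2) for all u, w). Then for every β_k, ‖β_k‖^2 + ‖Σ_{11}^{-1} Σ_{1k} β_k‖^2 ≤ ‖(I - P_1) X_k β_k‖^2 / (n c). -/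
/-! Since `P₁ X_k = X₁ Σ₁₁⁻¹ Σ₁ₖ`, the residual `(I - P₁) X_k β_k` equals `X₁ v + X_k β_k` with
`v = -Σ₁₁⁻¹ Σ₁ₖ β_k`; the eigenvalue bound applied to `(v, β_k)` is then the claim. -/

open Finset Matrix

theorem Matrix.smul_mul_mul_transpose_mul {l m o α : Type*} [Fintype l] [Fintype m]
    [CommSemiring α] (r : α) (A : Matrix l m α) (B : Matrix m m α) (C : Matrix l o α) :
    r • (A * B * Aᵀ) * C = A * (B * (r • (Aᵀ * C))) := by
  rw [Matrix.smul_mul, Matrix.mul_smul, Matrix.mul_smul, Matrix.mul_assoc, Matrix.mul_assoc]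

theorem Matrix.sub_mulVec_eq_mulVec_neg_add_mulVec {k l m α : Type*} [Fintype k] [Fintype l]
    [Fintype m] [CommRing α] {P : Matrix k k α} {X : Matrix k l α} {Y : Matrix k m α}
    {G : Matrix l m α} (hPY : P * Y = X * G) (β : m → α) :
    Y *ᵥ β - P *ᵥ (Y *ᵥ β) = X *ᵥ -(G *ᵥ β) + Y *ᵥ β := by
  rw [mulVec_mulVec, hPY, ← mulVec_mulVec, mulVec_neg]
  abel

theorem lemma1_projection_bound_general (n q m : ℕ)
    (X1 : Matrix (Fin n) (Fin q) ℝ) (Xk : Matrix (Fin n) (Fin m) ℝ)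
    (S11 : Matrix (Fin q) (Fin q) ℝ)
    (S1k : Matrix (Fin q) (Fin m) ℝ) (hS1k : S1k = (n : ℝ)⁻¹ • (X1ᵀ * Xk))
    (P1 : Matrix (Fin n) (Fin n) ℝ) (hP1 : P1 = (n : ℝ)⁻¹ • (X1 * S11⁻¹ * X1ᵀ))
    (c : ℝ) (hc : 0 < c)
    (heig : ∀ (u : Fin q → ℝ) (w : Fin m → ℝ),
      c * ((∑ j, (u j) ^ 2) + ∑ j, (w j) ^ 2) ≤
        (∑ i, (X1.mulVec u i + Xk.mulVec w i) ^ 2) / n) :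
    ∀ βk : Fin m → ℝ,
      (∑ j, (βk j) ^ 2) + ∑ j, ((S11⁻¹ * S1k).mulVec βk j) ^ 2 ≤
        (∑ i, (Xk.mulVec βk i - P1.mulVec (Xk.mulVec βk) i) ^ 2) / (n * c) := by
  intro βk
  have hPXk : P1 * Xk = X1 * (S11⁻¹ * S1k) := by
    rw [hP1, hS1k, smul_mul_mul_transpose_mul]
  have hres (i : Fin n) :
      (X1 *ᵥ -((S11⁻¹ * S1k) *ᵥ βk)) i + (Xk *ᵥ βk) i = (Xk *ᵥ βk) i - (P1 *ᵥ (Xk *ᵥ βk)) i :=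
    congrFun (sub_mulVec_eq_mulVec_neg_add_mulVec hPXk βk).symm i
  have h := heig (-((S11⁻¹ * S1k) *ᵥ βk)) βk
  simp only [hres, Pi.neg_apply, neg_sq] at h
  rw [← div_div, le_div_iff₀ hc]
  linarith

/-- Inequality (5.7) of Lemma 1: if the Gram matrix of the combined columns
(X₁, X_k) has smallest eigenvalue at least c > 0, then
‖β_k‖² + ‖Σ₁₁⁻¹ Σ₁ₖ β_k‖² ≤ ‖(I - P₁) X_k β_k‖² / (n c). -/
theorem lemma1_projection_bound (n q m : ℕ)
    (X1 : Matrix (Fin n) (Fin q) ℝ) (Xk : Matrix (Fin n) (Fin m) ℝ)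
    (S11 : Matrix (Fin q) (Fin q) ℝ) (hS11 : S11 = (n : ℝ)⁻¹ • (X1ᵀ * X1))
    (S1k : Matrix (Fin q) (Fin m) ℝ) (hS1k : S1k = (n : ℝ)⁻¹ • (X1ᵀ * Xk))
    (hinv : IsUnit S11.det)
    (P1 : Matrix (Fin n) (Fin n) ℝ) (hP1 : P1 = (n : ℝ)⁻¹ • (X1 * S11⁻¹ * X1ᵀ))
    (c : ℝ) (hc : 0 < c)
    (heig : ∀ (u : Fin q → ℝ) (w : Fin m → ℝ),
      c * ((∑ j, (u j) ^ 2) + ∑ j, (w j) ^ 2) ≤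
        (∑ i, (X1.mulVec u i + Xk.mulVec w i) ^ 2) / n) :
    ∀ βk : Fin m → ℝ,
      (∑ j, (βk j) ^ 2) + ∑ j, ((S11⁻¹ * S1k).mulVec βk j) ^ 2 ≤
        (∑ i, (Xk.mulVec βk i - P1.mulVec (Xk.mulVec βk) i) ^ 2) / (n * c) :=
  lemma1_projection_bound_general n q m X1 Xk S11 S1k hS1k P1 hP1 c hc heig
end

section
/- In the setting where β̂ is a LASSO solution with support in A_1 and Σ_{11} is invertible, each coordinate of the vector X_2'(I - P_1)X_2 β_2 + X_2'(I - P_1)ε + Σ_{21}Σ_{11}^{-1} s_1 λ has absolute value at most λ, where P_1 = X_1 Σ_{11}^{-1} X_1'/n is the projection onto the span of the columns of X_1. -/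
/-!
Since `P₁ X₁ = X₁`, the residual `r = y - X₁ β̂₁ = X₁ (β₁ - β̂₁) + X₂ β₂ + ε` satisfies
`(I - P₁) r = (I - P₁) X₂ β₂ + (I - P₁) ε`, while `X₂' P₁ r = λ Σ₂₁ Σ₁₁⁻¹ s₁`. Hence the vector
in question is `X₂' r`, whose coordinates are bounded by `λ` by dual feasibility.
-/

open Matrix

section HatMatrix

variable {R m k l : Type*} [CommRing R] [Fintype m] [Fintype k]

theorem Matrix.smul_mul_nonsing_inv_mul_transpose_mul_self [DecidableEq k] {c : R}
    {A : Matrix m k R} {S : Matrix k k R} (hS : S = c • (Aᵀ * A)) (hdet : IsUnit S.det) :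
    c • (A * S⁻¹ * Aᵀ) * A = A :=
  calc c • (A * S⁻¹ * Aᵀ) * A = A * (S⁻¹ * (c • (Aᵀ * A))) := by
        simp only [Matrix.smul_mul, Matrix.mul_smul, Matrix.mul_assoc]
    _ = A := by rw [← hS, nonsing_inv_mul _ hdet, Matrix.mul_one]

theorem Matrix.transpose_mul_smul_mul_mul_transpose (c : R) (A : Matrix m k R)
    (B : Matrix m l R) (S : Matrix k k R) :
    Bᵀ * (c • (A * S * Aᵀ)) = c • (Bᵀ * A) * S * Aᵀ := by
  simp only [Matrix.smul_mul, Matrix.mul_smul, Matrix.mul_assoc]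

theorem Matrix.sub_mulVec_add_mulVec_of_mul_eq {P : Matrix m m R} {A : Matrix m k R}
    (hP : P * A = A) (u : k → R) (w : m → R) :
    (w - P *ᵥ w) + P *ᵥ (A *ᵥ u + w) = A *ᵥ u + w := by
  rw [mulVec_add, mulVec_mulVec, hP]
  abel

end HatMatrix

/-- Inequality (5.11): each coordinate of
X₂'(I-P₁)X₂β₂ + X₂'(I-P₁)ε + Σ₂₁Σ₁₁⁻¹s₁λ has absolute value at most λ,
where P₁ is the projection onto the span of the columns of X₁. -/
theorem lasso_inequality_5_11 (n q1 q2 : ℕ)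
    (X1 : Matrix (Fin n) (Fin q1) ℝ) (X2 : Matrix (Fin n) (Fin q2) ℝ)
    (β1 βhat1 : Fin q1 → ℝ) (β2 : Fin q2 → ℝ) (ε y : Fin n → ℝ)
    (hy : y = X1.mulVec β1 + X2.mulVec β2 + ε)
    (lam : ℝ) (hlam : 0 < lam)
    (S11 : Matrix (Fin q1) (Fin q1) ℝ) (hS11 : S11 = (n : ℝ)⁻¹ • (X1ᵀ * X1))
    (S21 : Matrix (Fin q2) (Fin q1) ℝ) (hS21 : S21 = (n : ℝ)⁻¹ • (X2ᵀ * X1))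
    (hinv : IsUnit S11.det)
    (P1 : Matrix (Fin n) (Fin n) ℝ) (hP1 : P1 = (n : ℝ)⁻¹ • (X1 * S11⁻¹ * X1ᵀ))
    (s1 : Fin q1 → ℝ) (hs1 : s1 = lam⁻¹ • X1ᵀ.mulVec (y - X1.mulVec βhat1))
    (hdual : ∀ j : Fin q2, |X2ᵀ.mulVec (y - X1.mulVec βhat1) j| ≤ lam) :
    ∀ j : Fin q2,
      |X2ᵀ.mulVec (X2.mulVec β2 - P1.mulVec (X2.mulVec β2)) j
          + X2ᵀ.mulVec (ε - P1.mulVec ε) j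
          + lam * (S21 * S11⁻¹).mulVec s1 j| ≤ lam := by
  intro j
  have hPX1 : P1 * X1 = X1 := hP1 ▸ smul_mul_nonsing_inv_mul_transpose_mul_self hS11 hinv
  have hr : y - X1 *ᵥ βhat1 = X1 *ᵥ (β1 - βhat1) + (X2 *ᵥ β2 + ε) := by
    rw [hy, mulVec_sub]
    abel
  have hs1_proj : lam • (S21 * S11⁻¹) *ᵥ s1 = X2ᵀ *ᵥ (P1 *ᵥ (y - X1 *ᵥ βhat1)) := by
    rw [hs1, mulVec_smul, smul_smul, mul_inv_cancel₀ hlam.ne', one_smul, mulVec_mulVec,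
      mulVec_mulVec, hP1, hS21, transpose_mul_smul_mul_mul_transpose]
  have key : X2ᵀ *ᵥ (X2 *ᵥ β2 - P1 *ᵥ (X2 *ᵥ β2)) + X2ᵀ *ᵥ (ε - P1 *ᵥ ε)
      + lam • (S21 * S11⁻¹) *ᵥ s1 = X2ᵀ *ᵥ (y - X1 *ᵥ βhat1) := by
    rw [hs1_proj, ← mulVec_add, ← mulVec_add, sub_add_sub_comm, ← mulVec_add, hr,
      sub_mulVec_add_mulVec_of_mul_eq hPX1]
  have key_j := congrFun key j
  simp only [Pi.add_apply, Pi.smul_apply, smul_eq_mul] at key_j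
  exact key_j ▸ hdual j
end

section
/- Let X be an n×p matrix, λ > 0, and β̂ a LASSO solution for data y = Xβ + ε. Let A_1 ⊇ {j : β̂_j ≠ 0} with Σ_{11} = X_{A_1}'X_{A_1}/n having smallest eigenvalue ≥ c_* > 0, and P_1 the projection onto the span of the columns in A_1. Then ‖X_{A_1}(β̂_{A_1} - β_{A_1})‖ ≤ ‖Xβ - X_{A_1}β_{A_1}‖ + ‖P_1 ε‖ + λ·sqrt(|A_1|/(c_* n)). -/
/-!
Write `v = X₁(β̂₁ - β₁)` and `r = y - Xβ̂` for the LASSO residual. Since `β̂` is supported in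
`A₁`, `r = (Xβ - X₁β₁) + ε - v`, so `‖v‖² = ⟨v, Xβ - X₁β₁⟩ + ⟨v, ε⟩ - ⟨β̂₁ - β₁, X₁ᵀr⟩`. As `v` lies
in the column span of `X₁`, `⟨v, ε⟩ = ⟨v, P₁ε⟩`. The KKT conditions give `‖X₁ᵀr‖_∞ ≤ λ`, so the
last term is at most `λ‖β̂₁ - β₁‖₁ ≤ λ √|A₁| ‖β̂₁ - β₁‖₂ ≤ λ √(|A₁| / (c_* n)) ‖v‖` by the
eigenvalue bound. Cauchy–Schwarz on the first two terms and division by `‖v‖` finish the proof.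
-/

open Finset Matrix

theorem abs_le_of_forall_mul_le_sq_mul_add {g C lam : ℝ} (hC : 0 ≤ C)
    (h : ∀ t, t * g ≤ t ^ 2 * C + lam * |t|) : |g| ≤ lam := by
  refine le_of_forall_pos_le_add fun e he => ?_
  set t := e / (C + 1)
  have ht : 0 < t := by positivity
  have htC : t * C ≤ e := by
    rw [div_mul_eq_mul_div, div_le_iff₀ (by positivity)]
    nlinarith
  have hpos := h t
  have hneg := h (-t)
  rw [abs_of_pos ht] at hpos
  rw [abs_neg, abs_of_pos ht] at hneg
  rw [abs_le]
  constructor <;> nlinarith [mul_le_mul_of_nonneg_left htC ht.le]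

section Lasso

variable {m k : Type*} [Fintype m] [Fintype k]

noncomputable def lassoObjective (X : Matrix m k ℝ) (y : m → ℝ) (lam : ℝ) (b : k → ℝ) : ℝ :=
  (∑ i, (y i - (X *ᵥ b) i) ^ 2) / 2 + lam * ∑ j, |b j|

theorem lassoObjective_add_single_le [DecidableEq k] (X : Matrix m k ℝ) (y : m → ℝ) {lam : ℝ}
    (hlam : 0 ≤ lam) (b : k → ℝ) (j : k) (t : ℝ) :
    lassoObjective X y lam (b + Pi.single j t) ≤ lassoObjective X y lam b
      - t * (Xᵀ *ᵥ (y - X *ᵥ b)) j + t ^ 2 * (∑ i, X i j ^ 2) / 2 + lam * |t| := by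
  have hcol (i : m) : (X *ᵥ (b + Pi.single j t)) i = (X *ᵥ b) i + t * X i j := by
    simp [mulVec_add]
  have hgrad : (Xᵀ *ᵥ (y - X *ᵥ b)) j = ∑ i, X i j * (y i - (X *ᵥ b) i) := rfl
  have hquad : ∑ i, (y i - (X *ᵥ (b + Pi.single j t)) i) ^ 2 = ∑ i, (y i - (X *ᵥ b) i) ^ 2
      - 2 * t * (Xᵀ *ᵥ (y - X *ᵥ b)) j + t ^ 2 * ∑ i, X i j ^ 2 := by
    simp only [hcol, hgrad, mul_sum, ← sum_sub_distrib, ← sum_add_distrib]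
    exact sum_congr rfl fun i _ => by ring
  have hl1 : ∑ i, |(b + Pi.single j t : k → ℝ) i| ≤ ∑ i, |b i| + |t| := by
    calc ∑ i, |(b + Pi.single j t : k → ℝ) i|
        ≤ ∑ i, (|b i| + |(Pi.single j t : k → ℝ) i|) := sum_le_sum fun i _ => abs_add_le _ _
      _ = ∑ i, |b i| + |t| := by
          rw [sum_add_distrib]
          simp [Pi.single_apply, apply_ite]
  unfold lassoObjective
  rw [hquad]
  linarith [mul_le_mul_of_nonneg_left hl1 hlam]

theorem abs_transpose_mulVec_sub_le_of_isMinOn [DecidableEq k] {X : Matrix m k ℝ}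
    {y : m → ℝ} {lam : ℝ} (hlam : 0 ≤ lam) {βhat : k → ℝ}
    (hmin : IsMinOn (lassoObjective X y lam) Set.univ βhat) (j : k) :
    |(Xᵀ *ᵥ (y - X *ᵥ βhat)) j| ≤ lam := by
  refine abs_le_of_forall_mul_le_sq_mul_add (C := (∑ i, X i j ^ 2) / 2) (by positivity)
    fun t => ?_
  have := (isMinOn_univ_iff.mp hmin _).trans (lassoObjective_add_single_le X y hlam βhat j t)
  linarith

end Lasso

theorem mulVec_eq_submatrix_mulVec_of_support_subset {m k R : Type*} [Fintype m] [Fintype k]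
    [NonUnitalNonAssocSemiring R] (X : Matrix m k R) {b : k → R} {A : Finset k}
    (hb : ∀ j, b j ≠ 0 → j ∈ A) :
    X *ᵥ b = X.submatrix id ((↑) : A → k) *ᵥ fun j => b j := by
  ext i
  simp only [mulVec, dotProduct, submatrix_apply, id]
  rw [sum_coe_sort A fun j => X i j * b j]
  refine (sum_subset (subset_univ A) fun j _ hj => ?_).symm
  rw [not_imp_comm.mp (hb j) hj, mul_zero]

theorem posDef_smul_transpose_mul_self {m k : Type*} [Fintype m] [Fintype k]
    {X : Matrix m k ℝ} {c d : ℝ} (hc : 0 < c)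
    (h : ∀ v, c * ∑ j, v j ^ 2 ≤ (∑ i, (X *ᵥ v) i ^ 2) / d) : (d⁻¹ • (Xᵀ * X)).PosDef := by
  refine posDef_iff_dotProduct_mulVec.mpr ⟨?_, fun v hv => ?_⟩
  · simpa using (isHermitian_conjTranspose_mul_self X).smul (IsSelfAdjoint.all d⁻¹)
  · have hquad : star v ⬝ᵥ (d⁻¹ • (Xᵀ * X)) *ᵥ v = (∑ i, (X *ᵥ v) i ^ 2) / d := by
      rw [smul_mulVec, dotProduct_smul, ← mulVec_mulVec, star_trivial, dotProduct_mulVec,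
        vecMul_transpose]
      simp [dotProduct, sq, div_eq_inv_mul]
    have hv2 : 0 < ∑ j, v j ^ 2 := by
      simpa [dotProduct, sq] using dotProduct_self_star_pos_iff.mpr hv
    rw [hquad]
    exact (mul_pos hc hv2).trans_le (h v)

theorem transpose_mul_smul_mul_inv_mul_transpose {m k K : Type*} [Fintype m] [Fintype k]
    [DecidableEq k] [CommRing K] {X : Matrix m k K} {c : K} {S : Matrix k k K}
    (hS : S = c • (Xᵀ * X)) (hdet : IsUnit S.det) : Xᵀ * (c • (X * S⁻¹ * Xᵀ)) = Xᵀ := by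
  rw [Matrix.mul_smul, ← Matrix.mul_assoc, ← Matrix.mul_assoc, ← Matrix.smul_mul,
    ← Matrix.smul_mul, ← hS, mul_nonsing_inv S hdet, Matrix.one_mul]

theorem mulVec_dotProduct_mulVec_of_transpose_mul_eq {m k R : Type*} [Fintype m] [Fintype k]
    [CommSemiring R] {X : Matrix m k R} {P : Matrix m m R} (hP : Xᵀ * P = Xᵀ) (x : k → R)
    (e : m → R) : (X *ᵥ x) ⬝ᵥ (P *ᵥ e) = (X *ᵥ x) ⬝ᵥ e := by
  rw [dotProduct_mulVec, ← vecMul_transpose, vecMul_vecMul, hP]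

theorem abs_dotProduct_le_mul_sum_abs {ι : Type*} [Fintype ι] {δ g : ι → ℝ} {lam : ℝ}
    (hg : ∀ j, |g j| ≤ lam) : |δ ⬝ᵥ g| ≤ lam * ∑ j, |δ j| := by
  refine (abs_sum_le_sum_abs _ _).trans ?_
  rw [mul_sum]
  gcongr with j
  rw [abs_mul, mul_comm]
  exact mul_le_mul_of_nonneg_right (hg j) (abs_nonneg _)

theorem sum_abs_le_sqrt_card_div_mul {ι : Type*} [Fintype ι] {δ : ι → ℝ} {c q : ℝ}
    (hc : 0 < c) (h : c * ∑ j, δ j ^ 2 ≤ q) :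
    ∑ j, |δ j| ≤ √(Fintype.card ι / c * q) := by
  refine Real.le_sqrt_of_sq_le ?_
  calc (∑ j, |δ j|) ^ 2 ≤ Fintype.card ι * ∑ j, |δ j| ^ 2 := sq_sum_le_card_mul_sum_sq
    _ = Fintype.card ι * ∑ j, δ j ^ 2 := by simp only [sq_abs]
    _ ≤ Fintype.card ι / c * q := by
      rw [div_mul_eq_mul_div, le_div_iff₀ hc, mul_assoc]
      gcongr
      linarith

theorem le_of_sq_le_mul {x a : ℝ} (ha : 0 ≤ a) (h : x ^ 2 ≤ a * x) : x ≤ a := by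
  nlinarith

theorem sqrt_sum_sq_le_of_sum_sq_eq {m ι : Type*} [Fintype m] [Fintype ι]
    {v u w : m → ℝ} {δ g : ι → ℝ} {lam c d : ℝ} (hlam : 0 ≤ lam) (hc : 0 < c)
    (hv : ∑ i, v i ^ 2 = v ⬝ᵥ u + v ⬝ᵥ w - δ ⬝ᵥ g) (hg : ∀ j, |g j| ≤ lam)
    (hδ : c * ∑ j, δ j ^ 2 ≤ (∑ i, v i ^ 2) / d) :
    √(∑ i, v i ^ 2) ≤ √(∑ i, u i ^ 2) + √(∑ i, w i ^ 2) + lam * √(Fintype.card ι / (c * d)) := by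
  have hvu : v ⬝ᵥ u ≤ √(∑ i, v i ^ 2) * √(∑ i, u i ^ 2) := Real.sum_mul_le_sqrt_mul_sqrt _ v u
  have hvw : v ⬝ᵥ w ≤ √(∑ i, v i ^ 2) * √(∑ i, w i ^ 2) := Real.sum_mul_le_sqrt_mul_sqrt _ v w
  have hδg : -(δ ⬝ᵥ g) ≤ lam * √(Fintype.card ι / (c * d)) * √(∑ i, v i ^ 2) :=
    calc -(δ ⬝ᵥ g) ≤ lam * ∑ j, |δ j| := (neg_le_abs _).trans (abs_dotProduct_le_mul_sum_abs hg)
      _ ≤ lam * √(Fintype.card ι / c * ((∑ i, v i ^ 2) / d)) :=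
          mul_le_mul_of_nonneg_left (sum_abs_le_sqrt_card_div_mul hc hδ) hlam
      _ = lam * √(Fintype.card ι / (c * d)) * √(∑ i, v i ^ 2) := by
          rw [mul_assoc, ← Real.sqrt_mul' _ (by positivity)]
          ring_nf
  refine le_of_sq_le_mul (by positivity) ?_
  rw [Real.sq_sqrt (by positivity)]
  linarith

theorem lasso_prediction_bound_3_3_general (n p : ℕ)
    (X : Matrix (Fin n) (Fin p) ℝ) (β : Fin p → ℝ) (ε : Fin n → ℝ)
    (lam cl : ℝ) (hlam : 0 < lam) (hcl : 0 < cl)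
    (βhat : Fin p → ℝ)
    (hmin : ∀ b : Fin p → ℝ,
      (∑ i, (X.mulVec β i + ε i - X.mulVec βhat i) ^ 2) / 2 + lam * ∑ j, |βhat j| ≤
        (∑ i, (X.mulVec β i + ε i - X.mulVec b i) ^ 2) / 2 + lam * ∑ j, |b j|)
    (A1 : Finset (Fin p)) (hsupp : ∀ j, βhat j ≠ 0 → j ∈ A1)
    (X1 : Matrix (Fin n) A1 ℝ) (hX1 : X1 = fun i (j : A1) => X i j)
    (heig : ∀ v : A1 → ℝ,
      cl * (∑ j, (v j) ^ 2) ≤ (∑ i, (X1.mulVec v i) ^ 2) / n)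
    (S11 : Matrix A1 A1 ℝ) (hS11 : S11 = (n : ℝ)⁻¹ • (X1ᵀ * X1))
    (P1 : Matrix (Fin n) (Fin n) ℝ) (hP1 : P1 = (n : ℝ)⁻¹ • (X1 * S11⁻¹ * X1ᵀ)) :
    Real.sqrt (∑ i, (X1.mulVec (fun j : A1 => βhat j - β j) i) ^ 2) ≤
      Real.sqrt (∑ i, (X.mulVec β i - X1.mulVec (fun j : A1 => β j) i) ^ 2)
        + Real.sqrt (∑ i, (P1.mulVec ε i) ^ 2)
        + lam * Real.sqrt ((A1.card : ℝ) / (cl * n)) := by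
  replace hX1 : X1 = X.submatrix id (↑) := hX1
  set δ : A1 → ℝ := fun j => βhat j - β j
  set v := X1 *ᵥ δ
  set u : Fin n → ℝ := fun i => (X *ᵥ β) i - (X1 *ᵥ fun j : A1 => β j) i
  set r := X *ᵥ β + ε - X *ᵥ βhat
  have hres : r = u + ε - v := by
    have hv : v = (X1 *ᵥ fun j => βhat j) - X1 *ᵥ fun j => β j := mulVec_sub ..
    rw [show r = X *ᵥ β + ε - X1 *ᵥ fun j => βhat j by
      rw [hX1, ← mulVec_eq_submatrix_mulVec_of_support_subset X hsupp], hv]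
    ext i
    simp only [u, Pi.add_apply, Pi.sub_apply]
    ring
  have hproj : v ⬝ᵥ (P1 *ᵥ ε) = v ⬝ᵥ ε := by
    have hS11det : IsUnit S11.det := by
      rw [← isUnit_iff_isUnit_det, hS11]
      exact (posDef_smul_transpose_mul_self hcl heig).isUnit
    rw [hP1]
    exact mulVec_dotProduct_mulVec_of_transpose_mul_eq
      (transpose_mul_smul_mul_inv_mul_transpose hS11 hS11det) δ ε
  have hvv : ∑ i, v i ^ 2 = v ⬝ᵥ u + v ⬝ᵥ (P1 *ᵥ ε) - δ ⬝ᵥ (X1ᵀ *ᵥ r) := by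
    rw [hproj, dotProduct_mulVec δ X1ᵀ r, vecMul_transpose, show X1 *ᵥ δ = v from rfl, hres,
      dotProduct_sub, dotProduct_add, show ∑ i, v i ^ 2 = v ⬝ᵥ v by simp only [dotProduct, sq]]
    ring
  have hkkt (j : A1) : |(X1ᵀ *ᵥ r) j| ≤ lam := by
    rw [hX1]
    exact abs_transpose_mulVec_sub_le_of_isMinOn hlam.le (isMinOn_univ_iff.mpr hmin) j
  simpa only [Fintype.card_coe] using
    sqrt_sum_sq_le_of_sum_sq_eq hlam.le hcl hvv hkkt (heig δ)

/-- Inequality (3.3): for a LASSO solution β̂ with support in A₁ whose Gram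
matrix has smallest eigenvalue ≥ c_* > 0,
‖X₁(β̂₁-β₁)‖ ≤ ‖Xβ - X₁β₁‖ + ‖P₁ε‖ + λ√(|A₁|/(c_* n)). -/
theorem lasso_prediction_bound_3_3 (n p : ℕ) (hn : 0 < n)
    (X : Matrix (Fin n) (Fin p) ℝ) (β : Fin p → ℝ) (ε : Fin n → ℝ)
    (lam cl : ℝ) (hlam : 0 < lam) (hcl : 0 < cl)
    (βhat : Fin p → ℝ)
    (hmin : ∀ b : Fin p → ℝ,
      (∑ i, (X.mulVec β i + ε i - X.mulVec βhat i) ^ 2) / 2 + lam * ∑ j, |βhat j| ≤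
        (∑ i, (X.mulVec β i + ε i - X.mulVec b i) ^ 2) / 2 + lam * ∑ j, |b j|)
    (A1 : Finset (Fin p)) (hsupp : ∀ j, βhat j ≠ 0 → j ∈ A1)
    (X1 : Matrix (Fin n) A1 ℝ) (hX1 : X1 = fun i (j : A1) => X i j)
    (heig : ∀ v : A1 → ℝ,
      cl * (∑ j, (v j) ^ 2) ≤ (∑ i, (X1.mulVec v i) ^ 2) / n)
    (S11 : Matrix A1 A1 ℝ) (hS11 : S11 = (n : ℝ)⁻¹ • (X1ᵀ * X1))
    (P1 : Matrix (Fin n) (Fin n) ℝ) (hP1 : P1 = (n : ℝ)⁻¹ • (X1 * S11⁻¹ * X1ᵀ)) :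
    Real.sqrt (∑ i, (X1.mulVec (fun j : A1 => βhat j - β j) i) ^ 2) ≤
      Real.sqrt (∑ i, (X.mulVec β i - X1.mulVec (fun j : A1 => β j) i) ^ 2)
        + Real.sqrt (∑ i, (P1.mulVec ε i) ^ 2)
        + lam * Real.sqrt ((A1.card : ℝ) / (cl * n)) :=
  lasso_prediction_bound_3_3_general n p X β ε lam cl hlam hcl βhat hmin A1 hsupp X1 hX1 heig S11
    hS11 P1 hP1
end
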